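/- arXiv:2112.14488 — 2 statements merged into one kernel-verified Lean document; each statement's English description precedes it below -/
import Mathlib

section
/- For every ε > 0 there exists t₀ such that for all t ≥ t₀: with probability at least 1 - ε, a uniformly random necklace with 2 beads of each of t types admits no fair two-player partition using fewer than (2H^{-1}(1/2) - ε)·t cuts, where H^{-1} is the inverse of the binary entropy function on [0, 1/2]. In particular X(2,t,1) ≥ 0.22·t with high probability as t → ∞. -/
open scoped Classical

noncomputable section

/-- The number of cuts needed to realize the two-player partition `P`. -/
def cutsOf {n : ℕ} (P : Fin n → Fin 2) : ℕ :=
  (Finset.univ.filter (fun p : Fin n × Fin n =>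
    (p.1 : ℕ) + 1 = (p.2 : ℕ) ∧ P p.1 ≠ P p.2)).card

/-- The set of necklaces of length `2t` with exactly `2` beads of each of `t` types. -/
def neck (t : ℕ) : Finset (Fin (2 * t) → Fin t) :=
  Finset.univ.filter (fun f =>
    ∀ i : Fin t, (Finset.univ.filter (fun p => f p = i)).card = 2)

/-- `P` is a fair two-player partition of the necklace `f`: each player gets exactly one
bead of each type. -/
def Fair2 (t : ℕ) (f : Fin (2 * t) → Fin t) (P : Fin (2 * t) → Fin 2) : Prop :=
  ∀ j i, (Finset.univ.filter (fun p => P p = j ∧ f p = i)).card = 1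

/-- Necklaces all of whose fair two-player partitions need at least `r` cuts. -/
def hardNeck (t : ℕ) (r : ℝ) : Finset (Fin (2 * t) → Fin t) :=
  (neck t).filter (fun f => ∀ P, Fair2 t f P → r ≤ (cutsOf P : ℝ))

/-- The binary entropy function. -/
def binEnt (x : ℝ) : ℝ := -(x * Real.logb 2 x) - (1 - x) * Real.logb 2 (1 - x)

/-!
A partition with at most `k` cuts is determined by its first colour and its set of cuts, so there
are at most `2 ∑_{j ≤ k} C(2t-1, j) ≤ 2 · 2^((2t-1) H(k/(2t-1)))` of them; a fixed partition is fair
for at most `t!²` necklaces, since the necklace restricts to a bijection on each colour class. As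
there are at least `(2t)!/2ᵗ ≥ 4ᵗ t!² / ((2t+1) 2ᵗ)` necklaces, the fraction of necklaces with a
fair partition into at most `c t` cuts is `O(t · 2^((2H(c/2) - 1) t))`, which tends to `0` when
`c < 2 H⁻¹(1/2)`. Finally `H(0.11) < 1/2` gives `0.22 < 2 H⁻¹(1/2)`.
-/

open Finset Filter Topology Real
open scoped Nat

lemma binEnt_eq_binEntropy_div (x : ℝ) : binEnt x = binEntropy x / log 2 := by
  simp only [binEnt, binEntropy, logb, log_inv]
  ring

lemma binEnt_zero : binEnt 0 = 0 := by simp [binEnt_eq_binEntropy_div]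

lemma binEnt_nonneg {x : ℝ} (h₀ : 0 ≤ x) (h₁ : x ≤ 1) : 0 ≤ binEnt x := by
  rw [binEnt_eq_binEntropy_div]
  exact div_nonneg (binEntropy_nonneg h₀ h₁) (log_nonneg one_le_two)

lemma binEnt_strictMonoOn : StrictMonoOn binEnt (Set.Icc 0 2⁻¹) := fun _ ha _ hb hab => by
  simp only [binEnt_eq_binEntropy_div]
  exact div_lt_div_of_pos_right (binEntropy_strictMonoOn ha hb hab) (log_pos one_lt_two)

lemma existsUnique_binEnt_eq_half : ∃! x, x ∈ Set.Icc (0 : ℝ) 2⁻¹ ∧ binEnt x = 1 / 2 := by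
  have hcont : ContinuousOn binEnt (Set.Icc 0 2⁻¹) := by
    simp only [funext binEnt_eq_binEntropy_div]
    exact (binEntropy_continuous.div_const _).continuousOn
  have hmem : (1 / 2 : ℝ) ∈ Set.Icc (binEnt 0) (binEnt 2⁻¹) := by
    rw [binEnt_zero, binEnt_eq_binEntropy_div, binEntropy_two_inv,
      div_self (log_pos one_lt_two).ne']
    norm_num
  obtain ⟨x, hx, hx_eq⟩ := intermediate_value_Icc (by norm_num) hcont hmem
  exact ⟨x, ⟨hx, hx_eq⟩, fun y hy => binEnt_strictMonoOn.injOn hy.1 hx (hy.2.trans hx_eq.symm)⟩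

/-- `H(0.11) < 1/2` is the inequality `100¹⁰⁰ < 2⁵⁰ · 11¹¹ · 89⁸⁹` after exponentiating. -/
lemma binEnt_lt_half : binEnt 0.11 < 1 / 2 := by
  have key : log ((100 : ℝ) ^ 100) < log (2 ^ 50 * 11 ^ 11 * 89 ^ 89) :=
    log_lt_log (by positivity) (by norm_num)
  simp only [log_mul, log_pow, ne_eq, pow_eq_zero_iff, OfNat.ofNat_ne_zero, not_false_eq_true,
    mul_ne_zero_iff, and_self] at key
  have h11 : log 0.11 = log 11 - log 100 := by
    rw [← log_div (by norm_num) (by norm_num)]; norm_num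
  have h89 : log (1 - 0.11) = log 89 - log 100 := by
    rw [← log_div (by norm_num) (by norm_num)]; norm_num
  rw [binEnt, logb, logb, h11, h89, ← sub_pos]
  have hlog2 := log_pos one_lt_two
  field_simp
  push_cast at key
  linarith

/-- Compare each term with the `p = k / m` binomial distribution: `∑_{j ≤ k} C(m,j) p^k q^(m-k)
≤ ∑_j C(m,j) p^j q^(m-j) = 1`, and `p^k q^(m-k) = 2^(-m H(p))`. -/
lemma sum_range_choose_le_two_rpow {m k : ℕ} (hkm : 2 * k ≤ m) :
    ∑ j ∈ range (k + 1), (m.choose j : ℝ) ≤ 2 ^ (m * binEnt (k / m)) := by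
  obtain rfl | hk := k.eq_zero_or_pos
  · simp [binEnt_zero]
  set p : ℝ := k / m
  set q : ℝ := 1 - p
  have hm : (0 : ℝ) < m := by exact_mod_cast (show 0 < m by omega)
  have hmp : m * p = k := mul_div_cancel₀ _ hm.ne'
  have hp : 0 < p := by positivity
  have hpq : p ≤ q := by
    have : 2 * p ≤ 1 := by rw [← mul_div_assoc, div_le_one hm]; exact_mod_cast hkm
    simp only [q]; linarith
  have hq : 0 < q := hp.trans_le hpq
  have hterm : ∀ j ≤ k, p ^ k * q ^ (m - k) ≤ p ^ j * q ^ (m - j) := by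
    intro j hj
    calc p ^ k * q ^ (m - k) = p ^ j * p ^ (k - j) * q ^ (m - k) := by
          rw [← pow_add, Nat.add_sub_cancel' hj]
      _ ≤ p ^ j * q ^ (k - j) * q ^ (m - k) := by gcongr
      _ = p ^ j * q ^ (m - j) := by rw [mul_assoc, ← pow_add]; congr 2; omega
  have hsum : (∑ j ∈ range (k + 1), (m.choose j : ℝ)) * (p ^ k * q ^ (m - k)) ≤ 1 :=
    calc (∑ j ∈ range (k + 1), (m.choose j : ℝ)) * (p ^ k * q ^ (m - k))
        ≤ ∑ j ∈ range (k + 1), p ^ j * q ^ (m - j) * m.choose j := by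
          rw [sum_mul]
          refine sum_le_sum fun j hj => ?_
          rw [mul_comm]
          exact mul_le_mul_of_nonneg_right (hterm j (by simpa [Nat.lt_succ_iff] using hj))
            (by positivity)
      _ ≤ ∑ j ∈ range (m + 1), p ^ j * q ^ (m - j) * m.choose j :=
          sum_le_sum_of_subset_of_nonneg (range_subset_range.2 (by omega))
            fun _ _ _ => by positivity
      _ = 1 := by rw [← add_pow, add_sub_cancel, one_pow]
  have hentropy : (2 : ℝ) ^ (m * binEnt p) = (p ^ k * q ^ (m - k))⁻¹ := by
    rw [rpow_def_of_pos two_pos, ← exp_log (inv_pos.2 (by positivity))]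
    congr 1
    rw [log_inv, log_mul (by positivity) (by positivity), log_pow, log_pow,
      Nat.cast_sub (by omega), ← hmp]
    simp only [binEnt, logb, q]
    field_simp
    ring
  rw [hentropy, ← one_div, le_div_iff₀ (by positivity)]
  exact hsum

section Cuts

variable {n : ℕ}

def adjacentPairs (n : ℕ) : Finset (Fin n × Fin n) := univ.filter fun p => (p.1 : ℕ) + 1 = p.2

def cutSet (P : Fin n → Fin 2) : Finset (Fin n × Fin n) :=
  univ.filter fun p => (p.1 : ℕ) + 1 = p.2 ∧ P p.1 ≠ P p.2

lemma cutSet_subset_adjacentPairs (P : Fin n → Fin 2) : cutSet P ⊆ adjacentPairs n :=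
  monotone_filter_right _ fun _ _ h => h.1

lemma card_adjacentPairs (n : ℕ) : #(adjacentPairs n) = n - 1 := by
  rw [← card_range (n - 1)]
  refine card_bij (fun p _ => (p.1 : ℕ)) (fun p hp => ?_) (fun p hp q hq hpq => ?_) fun i hi => ?_
  · simp only [adjacentPairs, mem_filter, mem_univ, true_and] at hp
    simp only [mem_range]
    omega
  · simp only [adjacentPairs, mem_filter, mem_univ, true_and] at hp hq
    exact Prod.ext (Fin.ext hpq) (Fin.ext (by omega))
  · simp only [mem_range] at hi
    exact ⟨(⟨i, by omega⟩, ⟨i + 1, by omega⟩), by simp [adjacentPairs], rfl⟩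

lemma eq_of_cutSet_eq (hn : 0 < n) {P Q : Fin n → Fin 2} (h₀ : P ⟨0, hn⟩ = Q ⟨0, hn⟩)
    (h : cutSet P = cutSet Q) : P = Q := by
  suffices ∀ v (hv : v < n), P ⟨v, hv⟩ = Q ⟨v, hv⟩ from funext fun p => this p p.2
  intro v
  induction v with
  | zero => exact fun _ => h₀
  | succ w ih =>
    intro hv
    have hcut := Finset.ext_iff.mp h (⟨w, by omega⟩, ⟨w + 1, hv⟩)
    simp only [cutSet, mem_filter, mem_univ, true_and] at hcut
    have hw := ih (by omega)
    revert hw hcut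
    -- in `Fin 2` a colour is determined by its neighbour and whether they differ
    generalize P ⟨w, _⟩ = a, Q ⟨w, _⟩ = b, P ⟨w + 1, hv⟩ = c, Q ⟨w + 1, hv⟩ = d
    decide +revert

lemma card_filter_cutsOf_le (hn : 0 < n) (k : ℕ) :
    #{P : Fin n → Fin 2 | cutsOf P ≤ k} ≤ 2 * ∑ j ∈ range (k + 1), (n - 1).choose j := by
  let T := (univ : Finset (Fin 2)) ×ˢ (range (k + 1)).biUnion (powersetCard · (adjacentPairs n))
  have hmaps : ∀ P ∈ ({P : Fin n → Fin 2 | cutsOf P ≤ k} : Finset _),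
      (P ⟨0, hn⟩, cutSet P) ∈ T := by
    intro P hP
    simp only [mem_filter, mem_univ, true_and] at hP
    simp only [T, mem_product, mem_univ, true_and, mem_biUnion, mem_range, mem_powersetCard]
    exact ⟨cutsOf P, by omega, cutSet_subset_adjacentPairs P, rfl⟩
  calc _ ≤ #T := card_le_card_of_injOn _ hmaps fun P _ Q _ h =>
          eq_of_cutSet_eq hn (Prod.ext_iff.mp h).1 (Prod.ext_iff.mp h).2
    _ ≤ 2 * ∑ j ∈ range (k + 1), (n - 1).choose j := by
      rw [card_product, card_univ, Fintype.card_fin]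
      refine Nat.mul_le_mul_left _ (card_biUnion_le.trans_eq (sum_congr rfl fun j _ => ?_))
      rw [card_powersetCard, card_adjacentPairs]

end Cuts

lemma card_equiv_le_factorial (α β : Type*) [Fintype α] [DecidableEq α] [Fintype β]
    [DecidableEq β] : Fintype.card (α ≃ β) ≤ (Fintype.card β)! := by
  cases isEmpty_or_nonempty (α ≃ β) with
  | inl _ => simp
  | inr h => obtain ⟨e⟩ := h; rw [Fintype.card_equiv e, Fintype.card_congr e]

/-- A map that is bijective on every fibre of `σ` is determined by these bijections. -/
lemma card_filter_bijective_on_fibers_le {α ι β : Type*} [Fintype α] [DecidableEq α] [Fintype ι]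
    [DecidableEq ι] [Fintype β] [DecidableEq β] (σ : α → ι) :
    #{g : α → β | ∀ i, Function.Bijective fun a : {a // σ a = i} => g a} ≤
      (Fintype.card β)! ^ Fintype.card ι := by
  let S := {g : α → β // ∀ i, Function.Bijective fun a : {a // σ a = i} => g a}
  let toEquivs : S → ∀ i, {a // σ a = i} ≃ β := fun g i => Equiv.ofBijective _ (g.2 i)
  have hinj : Function.Injective toEquivs := fun g g' h =>
    Subtype.ext <| funext fun a => congrArg (· ⟨a, rfl⟩) (congrFun h (σ a))
  calc #{g : α → β | ∀ i, Function.Bijective fun a : {a // σ a = i} => g a}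
      = Fintype.card S := (Fintype.card_subtype _).symm
    _ ≤ Fintype.card (∀ i, {a // σ a = i} ≃ β) := Fintype.card_le_of_injective _ hinj
    _ ≤ ∏ _i : ι, (Fintype.card β)! := by
      rw [Fintype.card_pi]
      exact prod_le_prod' fun i _ => card_equiv_le_factorial _ _
    _ = (Fintype.card β)! ^ Fintype.card ι := by rw [prod_const, card_univ]

section Necklaces

variable {t : ℕ}

lemma Fair2.bijective {f : Fin (2 * t) → Fin t} {P : Fin (2 * t) → Fin 2} (hf : Fair2 t f P)
    (j : Fin 2) : Function.Bijective fun p : {p // P p = j} => f p := by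
  refine ⟨fun p q hpq => ?_, fun i => ?_⟩
  · obtain ⟨a, ha⟩ := card_eq_one.mp (hf j (f p))
    have hp : p.1 ∈ ({a} : Finset _) := ha ▸ by simp [p.2]
    have hq : q.1 ∈ ({a} : Finset _) := ha ▸ by simp [q.2, hpq]
    exact Subtype.ext ((mem_singleton.mp hp).trans (mem_singleton.mp hq).symm)
  · obtain ⟨a, ha⟩ := card_eq_one.mp (hf j i)
    have : a ∈ univ.filter fun p => P p = j ∧ f p = i := ha ▸ mem_singleton_self a
    simp only [mem_filter, mem_univ, true_and] at this
    exact ⟨⟨a, this.1⟩, this.2⟩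

lemma card_filter_fair2_le (P : Fin (2 * t) → Fin 2) : #{f | Fair2 t f P} ≤ t ! ^ 2 := by
  calc #{f | Fair2 t f P}
      ≤ #{f : Fin (2 * t) → Fin t | ∀ j, Function.Bijective fun p : {p // P p = j} => f p} :=
        card_le_card <| monotone_filter_right _ fun _ _ hf => Fair2.bijective hf
    _ ≤ t ! ^ 2 := by simpa using card_filter_bijective_on_fibers_le (β := Fin t) P

def necklaceOfEquiv (e : Fin (2 * t) ≃ Fin t × Fin 2) : Fin (2 * t) → Fin t := fun p => (e p).1

lemma necklaceOfEquiv_mem_neck (e : Fin (2 * t) ≃ Fin t × Fin 2) : necklaceOfEquiv e ∈ neck t := by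
  simp only [neck, mem_filter, mem_univ, true_and]
  intro i
  have : (univ.filter fun p => necklaceOfEquiv e p = i).map e.toEmbedding = {i} ×ˢ univ := by
    ext ⟨a, b⟩
    simp [necklaceOfEquiv, eq_comm]
  rw [← card_map, this, card_product, card_singleton, card_univ, Fintype.card_fin, one_mul]

lemma card_filter_necklaceOfEquiv_eq_le (f : Fin (2 * t) → Fin t) :
    #{e | necklaceOfEquiv e = f} ≤ 2 ^ t := by
  calc #{e | necklaceOfEquiv e = f}
      ≤ #{g : Fin (2 * t) → Fin 2 | ∀ i, Function.Bijective fun p : {p // f p = i} => g p} := by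
        refine card_le_card_of_injOn (fun e p => (e p).2) (fun e he => ?_) fun e he e' he' h => ?_
        · replace he : necklaceOfEquiv e = f := by simpa using he
          simp only [coe_filter, mem_univ, true_and, Set.mem_ofPred_eq]
          intro i
          refine ⟨fun p q hpq => Subtype.ext (e.injective (Prod.ext ?_ hpq)), fun b => ?_⟩
          · exact (congrFun he p).trans (p.2.trans (q.2.symm.trans (congrFun he q).symm))
          · exact ⟨⟨e.symm (i, b), (congrFun he _).symm.trans (by simp [necklaceOfEquiv])⟩,
              by simp⟩
        · replace he : necklaceOfEquiv e = f := by simpa using he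
          replace he' : necklaceOfEquiv e' = f := by simpa using he'
          exact Equiv.ext fun p => Prod.ext ((congrFun he p).trans (congrFun he' p).symm)
            (congrFun h p)
    _ ≤ 2 ^ t := by simpa using card_filter_bijective_on_fibers_le (β := Fin 2) f

lemma factorial_le_two_pow_mul_card_neck (t : ℕ) : (2 * t)! ≤ 2 ^ t * #(neck t) := by
  calc (2 * t)! = #(univ : Finset (Fin (2 * t) ≃ Fin t × Fin 2)) := by
        rw [card_univ, Fintype.card_equiv (finCongr (mul_comm 2 t) |>.trans finProdFinEquiv.symm),
          Fintype.card_fin]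
    _ ≤ 2 ^ t * #(neck t) :=
        card_le_mul_card_image_of_maps_to (fun e _ => necklaceOfEquiv_mem_neck e) _
          fun f _ => card_filter_necklaceOfEquiv_eq_le f

end Necklaces

lemma four_pow_mul_factorial_sq_le (t : ℕ) : 4 ^ t * t ! ^ 2 ≤ (2 * t + 1) * (2 * t)! := by
  have h := Nat.choose_mul_factorial_mul_factorial (show t ≤ 2 * t by omega)
  rw [show 2 * t - t = t by omega] at h
  calc 4 ^ t * t ! ^ 2 ≤ (2 * t + 1) * t.centralBinom * t ! ^ 2 :=
        Nat.mul_le_mul_right _ (Nat.four_pow_le_two_mul_add_one_mul_central_binom t)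
    _ = (2 * t + 1) * (2 * t)! := by rw [← h, Nat.centralBinom]; ring

def badNeck (t k : ℕ) : Finset (Fin (2 * t) → Fin t) :=
  (neck t).filter fun f => ∃ P, Fair2 t f P ∧ cutsOf P ≤ k

/-- The first-moment bound: each of the at most `2 ∑_{j ≤ k} C(2t-1, j)` partitions with at most
`k` cuts is fair for at most `t!²` necklaces, and there are at least `(2t)! / 2ᵗ` necklaces. -/
lemma card_badNeck_mul_two_pow_le {t : ℕ} (ht : 0 < t) (k : ℕ) :
    #(badNeck t k) * 2 ^ t ≤
      2 * (2 * t + 1) * (∑ j ∈ range (k + 1), (2 * t - 1).choose j) * #(neck t) := by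
  set S := ∑ j ∈ range (k + 1), (2 * t - 1).choose j
  have hbad : #(badNeck t k) ≤ 2 * S * t ! ^ 2 := by
    have hsub : badNeck t k ⊆ ({P | cutsOf P ≤ k} : Finset (Fin (2 * t) → Fin 2)).biUnion
        fun P => {f | Fair2 t f P} := by
      intro f hf
      obtain ⟨-, P, hfair, hcuts⟩ := mem_filter.mp hf
      exact mem_biUnion.mpr ⟨P, by simpa using hcuts, by simpa using hfair⟩
    calc #(badNeck t k) ≤ #({P | cutsOf P ≤ k} : Finset (Fin (2 * t) → Fin 2)) * t ! ^ 2 :=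
          (card_le_card hsub).trans (card_biUnion_le_card_mul _ _ _ fun P _ =>
            card_filter_fair2_le P)
      _ ≤ 2 * S * t ! ^ 2 := Nat.mul_le_mul_right _ (card_filter_cutsOf_le (by omega) k)
  refine Nat.le_of_mul_le_mul_right ?_ (pow_pos two_pos t)
  calc #(badNeck t k) * 2 ^ t * 2 ^ t = #(badNeck t k) * 4 ^ t := by
        rw [mul_assoc, ← mul_pow]; norm_num
    _ ≤ 2 * S * (4 ^ t * t ! ^ 2) := by
        rw [mul_comm (4 ^ t), ← mul_assoc]; exact Nat.mul_le_mul_right _ hbad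
    _ ≤ 2 * S * ((2 * t + 1) * (2 ^ t * #(neck t))) :=
        Nat.mul_le_mul_left _ ((four_pow_mul_factorial_sq_le t).trans
          (Nat.mul_le_mul_left _ (factorial_le_two_pow_mul_card_neck t)))
    _ = 2 * (2 * t + 1) * S * #(neck t) * 2 ^ t := by ring

lemma card_neck_pos (t : ℕ) : 0 < #(neck t) :=
  Nat.pos_of_mul_pos_left ((2 * t).factorial_pos.trans_le (factorial_le_two_pow_mul_card_neck t))

lemma neck_subset_hardNeck_union_badNeck (t : ℕ) (r : ℝ) :
    neck t ⊆ hardNeck t r ∪ badNeck t ⌊r⌋₊ := by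
  intro f hf
  by_cases hbad : ∃ P, Fair2 t f P ∧ cutsOf P ≤ ⌊r⌋₊
  · exact mem_union_right _ (mem_filter.mpr ⟨hf, hbad⟩)
  · push Not at hbad
    refine mem_union_left _ (mem_filter.mpr ⟨hf, fun P hP => ?_⟩)
    have : (⌊r⌋₊ + 1 : ℝ) ≤ cutsOf P := by exact_mod_cast hbad P hP
    linarith [Nat.lt_floor_add_one r]

lemma one_sub_card_badNeck_div_le (t : ℕ) (r : ℝ) :
    1 - (#(badNeck t ⌊r⌋₊) : ℝ) / #(neck t) ≤ (#(hardNeck t r) : ℝ) / #(neck t) := by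
  have hneck : (0 : ℝ) < #(neck t) := by exact_mod_cast card_neck_pos t
  have : (#(neck t) : ℝ) ≤ #(hardNeck t r) + #(badNeck t ⌊r⌋₊) := by
    exact_mod_cast (card_le_card (neck_subset_hardNeck_union_badNeck t r)).trans
      (card_union_le _ _)
  rw [one_sub_div hneck.ne']
  gcongr
  linarith

lemma card_hardNeck_div_le_one (t : ℕ) (r : ℝ) : (#(hardNeck t r) : ℝ) / #(neck t) ≤ 1 :=
  div_le_one_of_le₀ (by exact_mod_cast card_le_card (filter_subset _ _)) (Nat.cast_nonneg _)

lemma card_badNeck_div_le {t k : ℕ} {h : ℝ} (ht : 0 < t) (hkm : 2 * k ≤ 2 * t - 1)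
    (hH : binEnt (k / (2 * t - 1 : ℕ)) ≤ h) :
    (#(badNeck t k) : ℝ) / #(neck t) ≤ 2 * (2 * t + 1) * ((2 : ℝ) ^ (2 * h - 1)) ^ t := by
  have hneck : (0 : ℝ) < #(neck t) := by exact_mod_cast card_neck_pos t
  have hm : ((2 * t - 1 : ℕ) : ℝ) ≤ 2 * t := by
    rw [Nat.cast_sub (by omega)]; push_cast; linarith
  have hH₀ : 0 ≤ binEnt (k / (2 * t - 1 : ℕ)) := binEnt_nonneg (by positivity)
    (div_le_one_of_le₀ (by exact_mod_cast (show k ≤ 2 * t - 1 by omega)) (Nat.cast_nonneg _))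
  have hS : (∑ j ∈ range (k + 1), ((2 * t - 1).choose j : ℝ)) ≤ 2 ^ (2 * t * h) :=
    calc _ ≤ (2 : ℝ) ^ ((2 * t - 1 : ℕ) * binEnt (k / (2 * t - 1 : ℕ))) :=
          sum_range_choose_le_two_rpow hkm
      _ ≤ 2 ^ (2 * t * h) :=
          rpow_le_rpow_of_exponent_le one_le_two (mul_le_mul hm hH hH₀ (by positivity))
  have hmoment : (#(badNeck t k) : ℝ) * 2 ^ t ≤
      2 * (2 * t + 1) * (∑ j ∈ range (k + 1), ((2 * t - 1).choose j : ℝ)) * #(neck t) := by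
    exact_mod_cast card_badNeck_mul_two_pow_le ht k
  have hpow : ((2 : ℝ) ^ (2 * h - 1)) ^ t * 2 ^ t = 2 ^ (2 * t * h) := by
    rw [← rpow_natCast, ← rpow_mul zero_le_two, ← rpow_natCast 2 t, ← rpow_add two_pos]
    ring_nf
  rw [div_le_iff₀ hneck, ← mul_le_mul_iff_of_pos_right (pow_pos two_pos t)]
  calc (#(badNeck t k) : ℝ) * 2 ^ t
      ≤ 2 * (2 * t + 1) * (∑ j ∈ range (k + 1), ((2 * t - 1).choose j : ℝ)) * #(neck t) :=
        hmoment
    _ ≤ 2 * (2 * t + 1) * 2 ^ (2 * t * h) * #(neck t) := by gcongr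
    _ = 2 * (2 * t + 1) * ((2 : ℝ) ^ (2 * h - 1)) ^ t * #(neck t) * 2 ^ t := by
        rw [← hpow]; ring

/-- With `y = (c + 2x)/4 < x`, eventually `⌊c t⌋₊ ≤ y (2t-1)`, so the fraction of necklaces with
a fair partition into fewer than `c t` cuts is at most `2 (2t+1) 2^((2H(y)-1) t)`. -/
theorem tendsto_card_hardNeck_div_card_neck {x c : ℝ} (hx₀ : 0 < x) (hx₁ : x ≤ 1 / 2)
    (hHx : binEnt x = 1 / 2) (hc : c < 2 * x) :
    Tendsto (fun t : ℕ => (#(hardNeck t (c * t)) : ℝ) / #(neck t)) atTop (𝓝 1) := by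
  set y := max ((c + 2 * x) / 4) 0
  have hy₀ : 0 ≤ y := le_max_right _ _
  have hy₁ : y ≤ 2⁻¹ := max_le (by linarith) (by norm_num)
  have hh : binEnt y < 1 / 2 := hHx ▸ binEnt_strictMonoOn ⟨hy₀, hy₁⟩ ⟨hx₀.le, by linarith⟩
    (max_lt (by linarith) hx₀)
  set ρ : ℝ := 2 ^ (2 * binEnt y - 1)
  have hρ₀ : 0 ≤ ρ := by positivity
  have hρ₁ : ρ < 1 := rpow_lt_one_of_one_lt_of_neg one_lt_two (by linarith)
  have hdecay : Tendsto (fun t : ℕ => 2 * (2 * t + 1) * ρ ^ t) atTop (𝓝 0) := by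
    have h := ((tendsto_pow_const_mul_const_pow_of_lt_one 1 hρ₀ hρ₁).const_mul 4).add
      ((tendsto_pow_atTop_nhds_zero_of_lt_one hρ₀ hρ₁).const_mul 2)
    simp only [mul_zero, add_zero, pow_one] at h
    exact h.congr fun t => by ring
  refine tendsto_of_tendsto_of_tendsto_of_le_of_le' (by simpa using hdecay.const_sub 1)
    tendsto_const_nhds ?_ (Eventually.of_forall fun t => card_hardNeck_div_le_one t _)
  filter_upwards [eventually_ge_atTop 1,
    tendsto_natCast_atTop_atTop.eventually_ge_atTop (1 / (2 * x - c))] with t ht htc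
  set m := 2 * t - 1
  have hm : (m : ℝ) = 2 * t - 1 := by rw [Nat.cast_sub (by omega)]; push_cast; ring
  have hkm : (⌊c * t⌋₊ : ℝ) ≤ y * m := by
    rcases le_or_gt (c * t) 0 with hct | hct
    · rw [Nat.floor_of_nonpos hct, Nat.cast_zero]; positivity
    · rw [div_le_iff₀ (by linarith)] at htc
      calc (⌊c * t⌋₊ : ℝ) ≤ c * t := Nat.floor_le hct.le
        _ ≤ (c + 2 * x) / 4 * m := by rw [hm]; nlinarith
        _ ≤ y * m := by gcongr; exact le_max_left _ _
  have h2km : 2 * ⌊c * t⌋₊ ≤ m := by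
    have : (2 * ⌊c * t⌋₊ : ℝ) ≤ m := by nlinarith
    exact_mod_cast this
  have hH : binEnt (⌊c * t⌋₊ / m) ≤ binEnt y := by
    have hdiv : (⌊c * t⌋₊ : ℝ) / m ≤ y := by
      rw [div_le_iff₀ (by rw [hm]; linarith [(Nat.one_le_cast (α := ℝ)).mpr ht])]; exact hkm
    exact binEnt_strictMonoOn.monotoneOn ⟨by positivity, hdiv.trans hy₁⟩ ⟨hy₀, hy₁⟩ hdiv
  linarith [one_sub_card_badNeck_div_le t (c * t), card_badNeck_div_le ht h2km hH]

/-- With high probability, a random necklace with 2 beads of each of `t` types admits no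
fair two-player partition with fewer than `(2 H⁻¹(1/2) - ε) t` cuts; in particular
`X(2,t,1) ≥ 0.22 t` with high probability as `t → ∞`. -/
theorem stmt17 :
    (∀ ε : ℝ, 0 < ε → ∃ t₀ : ℕ, ∀ t : ℕ, t₀ ≤ t →
      ∀ x : ℝ, 0 ≤ x → x ≤ 1 / 2 → binEnt x = 1 / 2 →
        1 - ε ≤ ((hardNeck t ((2 * x - ε) * t)).card : ℝ) / ((neck t).card : ℝ)) ∧
    Filter.Tendsto
      (fun t : ℕ => ((hardNeck t (0.22 * t)).card : ℝ) / ((neck t).card : ℝ))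
      Filter.atTop (nhds 1) := by
  obtain ⟨x, ⟨⟨hx₀, hx₁⟩, hHx⟩, huniq⟩ := existsUnique_binEnt_eq_half
  replace hx₁ : x ≤ 1 / 2 := by rwa [one_div]
  have hx_pos : 0 < x := hx₀.lt_of_ne <| by rintro rfl; norm_num [binEnt_zero] at hHx
  refine ⟨fun ε hε => ?_, ?_⟩
  · obtain ⟨t₀, ht₀⟩ := eventually_atTop.mp <|
      (tendsto_card_hardNeck_div_card_neck hx_pos hx₁ hHx (by linarith : 2 * x - ε < 2 * x)
        ).eventually_const_le (by linarith : 1 - ε < 1)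
    refine ⟨t₀, fun t ht x' hx'₀ hx'₁ hHx' => ?_⟩
    obtain rfl := huniq x' ⟨⟨hx'₀, by rwa [← one_div]⟩, hHx'⟩
    exact ht₀ t ht
  · refine tendsto_card_hardNeck_div_card_neck hx_pos hx₁ hHx ?_
    by_contra! hsmall
    have := binEnt_strictMonoOn.monotoneOn ⟨hx₀, by linarith⟩ ⟨by norm_num, by norm_num⟩
      (by linarith : x ≤ 0.11)
    linarith [binEnt_lt_half]

end
end

section
/- Let f(t) = E[X(2,t,1)] be the expected minimum number of cuts for a fair two-player partition of a random necklace with 2 beads of each of t types. Then f(t+1) ≤ f(t) + 1/2 - f(t)/(2(2t+1)) + 1/(2t+2). -/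
/-!
Every necklace with `t + 1` types arises in exactly one way from a necklace with `t` types by
putting a bead of a new type `c` in front and its twin at one of the `2t + 1` positions `p`, the
old types being renumbered around `c`. An optimal fair partition `P` of the old necklace extends
to the new one by giving the two new beads to different players. Choosing who gets which, this
costs at most one extra cut, and none unless `p = 0` or the twin lands right after a bead of the
player `v` who owns the first bead, at a position that is not a cut of `P`. Player `v` owns `t`
beads, and since `P` starts with `v`, at least half of the cuts of `P` leave a run of `v`; so
summed over `p` the extra cost is at most `t + 1 - cutsOf P / 2`. Averaging over `c`, `p` and the
old necklace gives `f(t+1) ≤ f(t) + (2t + 2 - f(t)) / (2(2t + 1))`.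
-/

open scoped Classical

noncomputable section

/-- `X(2,t,1)` for a given necklace: the minimum number of cuts in a fair partition. -/
def X2t1 (t : ℕ) (f : Fin (2 * t) → Fin t) : ℕ :=
  sInf {n : ℕ | ∃ P : Fin (2 * t) → Fin 2, Fair2 t f P ∧ cutsOf P = n}

/-- `f(t) = E[X(2,t,1)]`, the expected minimum number of cuts over a uniformly random
necklace with 2 beads of each of `t` types. -/
def expX (t : ℕ) : ℝ := (∑ f ∈ neck t, (X2t1 t f : ℝ)) / ((neck t).card : ℝ)

open Finset

theorem List.ofFn_insertNth {β : Type*} {n : ℕ} (p : Fin (n + 1)) (x : β) (s : Fin n → β) :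
    List.ofFn (Fin.insertNth p x s) = (List.ofFn s).insertIdx p x := by
  induction n with
  | zero => rw [Fin.fin_one_eq_zero p, Fin.insertNth_zero']; simp
  | succ n ih =>
    induction p using Fin.cases with
    | zero => rw [Fin.insertNth_zero', List.ofFn_succ]; simp
    | succ p =>
      rw [← Fin.cons_self_tail s, Fin.insertNth_succ_cons, List.ofFn_cons, List.ofFn_cons, ih,
        Fin.val_succ, List.insertIdx_succ_cons]

theorem List.count_ofFn {β : Type*} [DecidableEq β] {n : ℕ} (s : Fin n → β) (b : β) :
    (List.ofFn s).count b = #{k | s k = b} := by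
  rw [← Multiset.coe_count, ← Fin.univ_val_map, Multiset.count_map]
  simp only [eq_comm]
  rfl

theorem Fin.card_filter_univ_eq_succAbove_succ {n : ℕ} (R : Fin (n + 2) → Prop)
    [DecidablePred R] (p : Fin (n + 1)) :
    #{k | R k} = #{k | R (p.succAbove k).succ} + (if R p.succ then 1 else 0)
      + (if R 0 then 1 else 0) := by
  simp only [card_filter, Fin.sum_univ_succ (fun k => if R k then 1 else 0),
    Fin.sum_univ_succAbove _ p]
  ring

namespace Necklace

section Lists

variable {α : Type*} [DecidableEq α]

def cuts : List α → ℕ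
  | a :: b :: l => (if a = b then 0 else 1) + cuts (b :: l)
  | _ => 0

/- `gapCost v a M q` is the extra cost of putting the twin at position `q` of `M`, where `a` is the
bead just before `M` and `v` the owner of the first bead of the whole list; `insertCost L p` is
the same for position `p` of `L`, the front position costing `1`. -/
def gapCost (v : α) : α → List α → ℕ → ℕ
  | a, [], _ => if a = v then 1 else 0
  | a, b :: _, 0 => if a = v ∧ b = v then 1 else 0
  | _, b :: M, q + 1 => gapCost v b M q

def insertCost : List α → ℕ → ℕ
  | _, 0 => 1
  | v :: M, q + 1 => gapCost v v M q
  | [], _ + 1 => 0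

theorem exists_cuts_insertIdx_le_gapCost (v a : Fin 2) (M : List (Fin 2)) (q : ℕ)
    (hq : q ≤ M.length) :
    ∃ j : Fin 2, (if j.rev = v then 0 else 1) + cuts (a :: M.insertIdx q j)
      ≤ cuts (a :: M) + gapCost v a M q := by
  -- the first summand is the cut between the front bead `j.rev` and the first bead `v`
  induction M generalizing a q with
  | nil =>
    refine ⟨a, ?_⟩
    obtain rfl : q = 0 := by simpa using hq
    revert a v; decide
  | cons b M ih =>
    cases q with
    | zero =>
      -- copy equal neighbours; between unequal ones, avoid a cut at the front instead
      refine ⟨if a = b then a else v.rev, ?_⟩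
      have key : ∀ a b v : Fin 2,
          (if (if a = b then a else v.rev).rev = v then 0 else 1)
            + ((if a = (if a = b then a else v.rev) then 0 else 1)
              + (if (if a = b then a else v.rev) = b then 0 else 1))
            ≤ (if a = b then 0 else 1) + (if a = v ∧ b = v then 1 else 0) := by decide
      have hab := key a b v
      simp only [List.insertIdx_zero, cuts, gapCost]
      omega
    | succ q =>
      obtain ⟨j, hj⟩ := ih b q (by simpa using hq)
      exact ⟨j, by simp only [List.insertIdx_succ_cons, cuts, gapCost]; omega⟩

theorem two_mul_sum_gapCost_add_cuts_le (v a : Fin 2) (M : List (Fin 2)) :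
    2 * ∑ q ∈ range (M.length + 1), gapCost v a M q + cuts (a :: M)
      ≤ 2 * (a :: M).count v + (if a = v then 0 else 1) := by
  induction M generalizing a with
  | nil => revert a v; decide
  | cons b M ih =>
    have key : ∀ a b v : Fin 2,
        2 * (if a = v ∧ b = v then 1 else 0) + (if a = b then 0 else 1)
          + (if b = v then 0 else 1)
          ≤ 2 * (if a = v then 1 else 0) + (if a = v then 0 else 1) := by
      decide
    have hab := key a b v
    have hb := ih b
    rw [List.length_cons, sum_range_succ']
    simp only [gapCost, cuts, List.count_cons, beq_iff_eq] at hb ⊢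
    omega

theorem exists_cuts_cons_rev_insertIdx_le (L : List (Fin 2)) (p : ℕ) (hp : p ≤ L.length) :
    ∃ j : Fin 2, cuts (j.rev :: L.insertIdx p j) ≤ cuts L + insertCost L p := by
  match L, p with
  | [], 0 => exact ⟨0, by decide⟩
  | v :: M, 0 =>
    have hv : v.rev ≠ v := (by decide : ∀ v : Fin 2, v.rev ≠ v) v
    exact ⟨v, by simp [cuts, insertCost, hv, add_comm]⟩
  | v :: M, q + 1 =>
    obtain ⟨j, hj⟩ := exists_cuts_insertIdx_le_gapCost v v M q (by simpa using hp)
    exact ⟨j, by simpa only [List.insertIdx_succ_cons, cuts, insertCost] using hj⟩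

theorem two_mul_sum_insertCost_add_cuts_le {L : List (Fin 2)} {n : ℕ}
    (hn : ∀ v ∈ L.head?, L.count v = n) :
    2 * ∑ p ∈ range (L.length + 1), insertCost L p + cuts L ≤ 2 * n + 2 := by
  match L with
  | [] => simp [insertCost, cuts]
  | v :: M =>
    have hv := two_mul_sum_gapCost_add_cuts_le v v M
    rw [hn v rfl] at hv
    rw [List.length_cons, sum_range_succ']
    simp only [insertCost, if_pos] at hv ⊢
    omega

end Lists

theorem cutsOf_cons {n : ℕ} (a : Fin 2) (s : Fin (n + 1) → Fin 2) :
    cutsOf (Fin.cons a s : Fin (n + 2) → Fin 2) = (if a = s 0 then 0 else 1) + cutsOf s := by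
  simp only [cutsOf, card_filter, Fintype.sum_prod_type, Fin.sum_univ_succ]
  simp

theorem cutsOf_eq_cuts_ofFn : ∀ {n : ℕ} (P : Fin n → Fin 2), cutsOf P = cuts (List.ofFn P)
  | 0, _ => rfl
  | 1, P => by simp [cutsOf, cuts]
  | n + 2, P => by
    rw [← Fin.cons_self_tail P, cutsOf_cons, cutsOf_eq_cuts_ofFn, List.ofFn_cons, List.ofFn_succ]
    rfl

section AddType

variable {t : ℕ}

def addType (c : Fin (t + 1)) (p : Fin (2 * t + 1)) (f : Fin (2 * t) → Fin t) :
    Fin (2 * (t + 1)) → Fin (t + 1) :=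
  Fin.cons c (Fin.insertNth p c (c.succAbove ∘ f))

theorem card_filter_addType_eq_self (c : Fin (t + 1)) (p : Fin (2 * t + 1))
    (f : Fin (2 * t) → Fin t) : #{k | addType c p f k = c} = 2 := by
  refine (Fin.card_filter_univ_eq_succAbove_succ (n := 2 * t) _ p).trans ?_
  simp [addType, Fin.succAbove_ne]

theorem card_filter_addType_eq_succAbove (c : Fin (t + 1)) (p : Fin (2 * t + 1))
    (f : Fin (2 * t) → Fin t) (i : Fin t) :
    #{k | addType c p f k = c.succAbove i} = #{k | f k = i} := by
  refine (Fin.card_filter_univ_eq_succAbove_succ (n := 2 * t) _ p).trans ?_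
  simp [addType, (Fin.succAbove_ne c i).symm]

theorem addType_mem_neck_iff {c : Fin (t + 1)} {p : Fin (2 * t + 1)} {f : Fin (2 * t) → Fin t} :
    addType c p f ∈ neck (t + 1) ↔ f ∈ neck t := by
  simp [neck, Fin.forall_iff_succAbove c, card_filter_addType_eq_self,
    card_filter_addType_eq_succAbove]

theorem addType_inj {c c' : Fin (t + 1)} {p p' : Fin (2 * t + 1)} {f f' : Fin (2 * t) → Fin t} :
    addType c p f = addType c' p' f' ↔ c = c' ∧ p = p' ∧ f = f' := by
  refine ⟨fun h => ?_, by rintro ⟨rfl, rfl, rfl⟩; rfl⟩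
  obtain ⟨rfl, h⟩ := Fin.cons_injective2 h
  obtain rfl : p = p' := by
    by_contra hne
    obtain ⟨k, rfl⟩ := Fin.exists_succAbove_eq hne
    simpa [Fin.succAbove_ne] using congrFun h (p'.succAbove k)
  obtain ⟨-, h⟩ := Fin.insertNth_injective2 h
  exact ⟨rfl, rfl, Fin.succAbove_right_injective.comp_left h⟩

theorem exists_addType_eq {g : Fin (2 * (t + 1)) → Fin (t + 1)} (hg : g ∈ neck (t + 1)) :
    ∃ c p f, f ∈ neck t ∧ addType c p f = g := by
  set c := g 0
  have hc : #{k | g k = c} = 2 := (mem_filter.1 hg).2 c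
  obtain ⟨k, hk, hk0⟩ := exists_mem_ne (by omega : 1 < #{k | g k = c}) 0
  obtain ⟨p, rfl⟩ : ∃ p : Fin (2 * t + 1), p.succ = k := Fin.exists_succ_eq.2 hk0
  set s := Fin.removeNth p (Fin.tail g)
  have hg' : g = Fin.cons c (Fin.insertNth p c s) := by
    conv_lhs => rw [← Fin.cons_self_tail g, ← Fin.insertNth_self_removeNth p (Fin.tail g)]
    rw [show Fin.tail g p = c from (mem_filter.1 hk).2]
  have hs : ∀ k, s k ≠ c := by
    have := (Fin.card_filter_univ_eq_succAbove_succ (n := 2 * t) _ p).symm.trans hc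
    rw [hg'] at this
    simpa using this
  choose f hf using fun k => Fin.exists_succAbove_eq (hs k)
  have hgf : addType c p f = g := by
    rw [hg', addType, show c.succAbove ∘ f = s from funext hf]
  exact ⟨c, p, f, addType_mem_neck_iff.1 (hgf ▸ hg), hgf⟩

theorem sum_neck_succ {M : Type*} [AddCommMonoid M]
    (F : (Fin (2 * (t + 1)) → Fin (t + 1)) → M) :
    ∑ g ∈ neck (t + 1), F g = ∑ c, ∑ f ∈ neck t, ∑ p, F (addType c p f) := by
  simp only [← sum_product']
  symm
  refine sum_nbij (fun x => addType x.1 x.2.2 x.2.1) ?_ ?_ ?_ fun _ _ => rfl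
  · rintro ⟨c, f, p⟩ h
    exact addType_mem_neck_iff.2 (by simpa using h)
  · rintro ⟨c, f, p⟩ - ⟨c', f', p'⟩ - h
    obtain ⟨rfl, rfl, rfl⟩ := addType_inj.1 h
    rfl
  · intro g hg
    obtain ⟨c, p, f, hf, rfl⟩ := exists_addType_eq hg
    exact ⟨(c, f, p), by simpa using hf, rfl⟩

theorem fair2_addType {f : Fin (2 * t) → Fin t} {P : Fin (2 * t) → Fin 2} (hP : Fair2 t f P)
    (c : Fin (t + 1)) (p : Fin (2 * t + 1)) (j : Fin 2) :
    Fair2 (t + 1) (addType c p f) (Fin.cons j.rev (Fin.insertNth p j P)) := by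
  intro j' i
  refine (Fin.card_filter_univ_eq_succAbove_succ (n := 2 * t) _ p).trans ?_
  rcases Fin.eq_self_or_eq_succAbove c i with rfl | ⟨i, rfl⟩
  · have : ∀ j j' : Fin 2, (if j = j' then 1 else 0) + (if j.rev = j' then 1 else 0) = 1 := by
      decide
    simpa [addType, Fin.succAbove_ne] using this j j'
  · simp [addType, (Fin.succAbove_ne c i).symm, hP j' i]

theorem neck_nonempty : ∀ t, (neck t).Nonempty
  | 0 => ⟨fun k => k.elim0, mem_filter.2 ⟨mem_univ _, fun i => i.elim0⟩⟩
  | t + 1 =>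
    have ⟨f, hf⟩ := neck_nonempty t
    ⟨addType 0 0 f, addType_mem_neck_iff.2 hf⟩

theorem exists_fair2 : ∀ {t} {f : Fin (2 * t) → Fin t}, f ∈ neck t → ∃ P, Fair2 t f P
  | 0, _, _ => ⟨fun _ => 0, fun _ i => i.elim0⟩
  | _ + 1, _, hg => by
    obtain ⟨c, p, f, hf, rfl⟩ := exists_addType_eq hg
    obtain ⟨P, hP⟩ := exists_fair2 hf
    exact ⟨_, fair2_addType hP c p 0⟩

theorem exists_fair2_cutsOf_eq_X2t1 {f : Fin (2 * t) → Fin t} (hf : f ∈ neck t) :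
    ∃ P, Fair2 t f P ∧ cutsOf P = X2t1 t f :=
  have ⟨P, hP⟩ := exists_fair2 hf
  Nat.sInf_mem (s := {n | ∃ P, Fair2 t f P ∧ cutsOf P = n}) ⟨_, P, hP, rfl⟩

theorem count_ofFn_of_fair2 {f : Fin (2 * t) → Fin t} {P : Fin (2 * t) → Fin 2}
    (hP : Fair2 t f P) (v : Fin 2) : (List.ofFn P).count v = t := by
  rw [List.count_ofFn, card_eq_sum_card_fiberwise (f := f) (t := univ) (by simp)]
  simp [filter_filter, hP v]

theorem X2t1_addType_le {f : Fin (2 * t) → Fin t} {P : Fin (2 * t) → Fin 2} (hP : Fair2 t f P)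
    (c : Fin (t + 1)) (p : Fin (2 * t + 1)) :
    X2t1 (t + 1) (addType c p f) ≤ cutsOf P + insertCost (List.ofFn P) p := by
  obtain ⟨j, hj⟩ := exists_cuts_cons_rev_insertIdx_le (List.ofFn P) p (by simpa using p.is_le)
  calc X2t1 (t + 1) (addType c p f)
      ≤ cutsOf (Fin.cons j.rev (Fin.insertNth p j P) : Fin (2 * (t + 1)) → Fin 2) :=
        Nat.sInf_le ⟨_, fair2_addType hP c p j, rfl⟩
    _ = cuts (j.rev :: (List.ofFn P).insertIdx p j) := by
        rw [cutsOf_eq_cuts_ofFn, List.ofFn_cons, List.ofFn_insertNth]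
    _ ≤ cutsOf P + insertCost (List.ofFn P) p := by rwa [cutsOf_eq_cuts_ofFn]

theorem two_mul_sum_X2t1_addType_add_le {f : Fin (2 * t) → Fin t} (hf : f ∈ neck t)
    (c : Fin (t + 1)) :
    2 * ∑ p, X2t1 (t + 1) (addType c p f) + X2t1 t f
      ≤ 2 * ((2 * t + 1) * X2t1 t f) + (2 * t + 2) := by
  obtain ⟨P, hP, hX⟩ := exists_fair2_cutsOf_eq_X2t1 hf
  have hsum : ∑ p, X2t1 (t + 1) (addType c p f)
      ≤ (2 * t + 1) * X2t1 t f + ∑ p ∈ range (2 * t + 1), insertCost (List.ofFn P) p := by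
    calc ∑ p, X2t1 (t + 1) (addType c p f)
        ≤ ∑ p : Fin (2 * t + 1), (cutsOf P + insertCost (List.ofFn P) p) :=
          sum_le_sum fun p _ => X2t1_addType_le hP c p
      _ = _ := by
          rw [sum_add_distrib, Fin.sum_univ_eq_sum_range (insertCost (List.ofFn P)), hX]
          simp
  have hcost := two_mul_sum_insertCost_add_cuts_le fun v _ => count_ofFn_of_fair2 hP v
  rw [List.length_ofFn, ← cutsOf_eq_cuts_ofFn, hX] at hcost
  omega

end AddType

theorem card_neck_succ (t : ℕ) : #(neck (t + 1)) = (t + 1) * (#(neck t) * (2 * t + 1)) := by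
  rw [card_eq_sum_ones, sum_neck_succ]
  simp

theorem expX_succ_le (t : ℕ) :
    expX (t + 1) ≤ expX t + (2 * t + 2 - expX t) / (2 * (2 * t + 1)) := by
  rw [expX, expX]
  set N : ℝ := ((neck t).card : ℝ)
  have hN : 0 < N := by simpa [N] using (neck_nonempty t).card_pos
  have hcard : ((neck (t + 1)).card : ℝ) = (t + 1) * (N * (2 * t + 1)) := by
    simp [N, card_neck_succ]
  have hsum : ∑ g ∈ neck (t + 1), (X2t1 (t + 1) g : ℝ)
      ≤ ∑ c : Fin (t + 1), ∑ f ∈ neck t,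
          ((2 * (t : ℝ) + 1) * X2t1 t f + (2 * t + 2 - X2t1 t f) / 2) := by
    rw [sum_neck_succ]
    gcongr with c _ f hf
    have hcf : 2 * ∑ p, (X2t1 (t + 1) (addType c p f) : ℝ) + X2t1 t f
        ≤ 2 * ((2 * t + 1) * X2t1 t f) + (2 * t + 2) := by
      exact_mod_cast two_mul_sum_X2t1_addType_add_le hf c
    linarith
  rw [hcard, div_le_iff₀ (by positivity)]
  refine hsum.trans (le_of_eq ?_)
  simp only [sum_const, card_univ, Fintype.card_fin, nsmul_eq_mul, sum_add_distrib, ← mul_sum,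
    ← sum_div, sum_sub_distrib]
  push_cast
  field_simp
  ring

end Necklace

theorem stmt18_general (t : ℕ) :
    expX (t + 1) ≤ expX t + 1 / 2 - expX t / (2 * (2 * (t : ℝ) + 1))
      + 1 / (2 * (t : ℝ) + 2) := by
  calc expX (t + 1) ≤ expX t + (2 * t + 2 - expX t) / (2 * (2 * t + 1)) :=
        Necklace.expX_succ_le t
    _ = expX t + 1 / 2 - expX t / (2 * (2 * t + 1)) + 1 / (2 * (2 * t + 1)) := by
        field_simp
        ring
    _ ≤ _ := by gcongr; linarith

/-- The recursion `f(t+1) ≤ f(t) + 1/2 - f(t)/(2(2t+1)) + 1/(2t+2)`. -/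
theorem stmt18 (t : ℕ) (ht : 1 ≤ t) :
    expX (t + 1) ≤ expX t + 1 / 2 - expX t / (2 * (2 * (t : ℝ) + 1))
      + 1 / (2 * (t : ℝ) + 2) :=
  stmt18_general t

end
end
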